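/- In VPCCS (the psi-calculus representation of value-passing CCS), no process has a bound-output transition: if P is a VPCCS process and P has an output transition with label (ν x⃗) K̄ N, then x⃗ is empty. -/
import Mathlib


/-! STATEMENT 18: VPCCS, the psi-calculus representation of value-passing
CCS.  Channel names and expression variables are drawn from disjoint copies
of ℕ (a name `Sum.inl c` has sort chan, `Sum.inr x` has sort exp).  Only
chan names may be restricted; channels carry expressions/values.  We show
that no VPCCS process has a bound-output transition. -/

/-- Data expressions: values, expression variables (exp-sort names), and
an arithmetic operation. -/
inductive Expr : Type
  | val (v : ℕ)
  | evar (x : ℕ)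
  | plus (e1 e2 : Expr)
deriving DecidableEq

/-- Evaluation of closed expressions. -/
def evalE : Expr → Option ℕ
  | .val v => some v
  | .evar _ => none
  | .plus a b =>
      match evalE a, evalE b with
      | some x, some y => some (x + y)
      | _, _ => none

/-- Syntactic replacement of the expression variable `x` by the value `v`. -/
def erep (x v : ℕ) : Expr → Expr
  | .val w => .val w
  | .evar y => if y = x then .val v else .evar y
  | .plus a b => .plus (erep x v a) (erep x v b)

/-- Evaluate an expression if it is closed, otherwise leave it unchanged. -/
def evalF (e : Expr) : Expr :=
  match evalE e with
  | some n => .val n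
  | none => e

/-- VPCCS substitution on expressions: replace and then evaluate. -/
def substE (x v : ℕ) (e : Expr) : Expr := evalF (erep x v e)

/-- The support (names) of an expression: only exp-sort names occur. -/
def esupp : Expr → Set (ℕ ⊕ ℕ)
  | .val _ => ∅
  | .evar x => {Sum.inr x}
  | .plus a b => esupp a ∪ esupp b

/-- Boolean conditions. -/
inductive BExpr : Type
  | tt
  | ff
  | beq (a b : Expr)

def beval : BExpr → Option Bool
  | .tt => some true
  | .ff => some false
  | .beq a b =>
      match evalE a, evalE b with
      | some x, some y => some (decide (x = y))
      | _, _ => none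

def bsub (x v : ℕ) : BExpr → BExpr
  | .tt => .tt
  | .ff => .ff
  | .beq a b => .beq (substE x v a) (substE x v b)

/-- VPCCS processes: output and input on chan names, case over boolean
conditions, restriction of chan names only (S_ν = {chan}), parallel and
replication. -/
inductive Proc : Type
  | nil
  | out (c : ℕ) (e : Expr) (P : Proc)
  | inp (c : ℕ) (x : ℕ) (P : Proc)
  | cas (brs : List (BExpr × Proc))
  | res (c : ℕ) (P : Proc)
  | par (P Q : Proc)
  | bang (P : Proc)

mutual
/-- Substitution of the value `v` for the exp-sort name `x` in a process. -/
def psub (x v : ℕ) : Proc → Proc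
  | .nil => .nil
  | .out c e P => .out c (substE x v e) (psub x v P)
  | .inp c y P => if y = x then .inp c y P else .inp c y (psub x v P)
  | .cas brs => .cas (psubBrs x v brs)
  | .res c P => .res c (psub x v P)
  | .par P Q => .par (psub x v P) (psub x v Q)
  | .bang P => .bang (psub x v P)

def psubBrs (x v : ℕ) : List (BExpr × Proc) → List (BExpr × Proc)
  | [] => []
  | (b, P) :: rest => (bsub x v b, psub x v P) :: psubBrs x v rest
end

mutual
/-- The free chan names of a process. -/
def pchans : Proc → Set ℕ
  | .nil => ∅
  | .out c _ P => {c} ∪ pchans P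
  | .inp c _ P => {c} ∪ pchans P
  | .cas brs => pchansBrs brs
  | .res c P => pchans P \ {c}
  | .par P Q => pchans P ∪ pchans Q
  | .bang P => pchans P

def pchansBrs : List (BExpr × Proc) → Set ℕ
  | [] => ∅
  | (_, P) :: rest => pchans P ∪ pchansBrs rest
end

/-- Actions: silent, input of a value, and (possibly bound) output of an
expression object with a list of opened (bound) chan names. -/
inductive Act : Type
  | tau
  | inA (c : ℕ) (v : ℕ)
  | outA (c : ℕ) (bs : List ℕ) (N : Expr)

/-- Bound names of an action. -/
def bnA : Act → List ℕ
  | .outA _ bs _ => bs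
  | _ => []

/-- All chan names of an action (subject, bound names, and the chan names
occurring in the object). -/
def actNames : Act → Set ℕ
  | .tau => ∅
  | .inA c _ => {c}
  | .outA c bs N => {c} ∪ {b | b ∈ bs} ∪ {a | Sum.inl a ∈ esupp N}

/-- Restriction of a list of names. -/
def resMany (bs : List ℕ) (P : Proc) : Proc := bs.foldr .res P

/-- The labelled operational semantics of VPCCS, specialising the
psi-calculus semantics: channel equivalence is identity on names; the
single-variable pattern matches any value; the Open rule requires the
opened name (necessarily of sort chan) to occur in the output object. -/
inductive VTrans : Proc → Act → Proc → Prop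
  | out (c : ℕ) (e : Expr) (P : Proc) :
      VTrans (.out c e P) (.outA c [] e) P
  | inp (c x : ℕ) (P : Proc) (v : ℕ) :
      VTrans (.inp c x P) (.inA c v) (psub x v P)
  | cas {brs : List (BExpr × Proc)} {b : BExpr} {P : Proc} {α : Act} {P' : Proc} :
      (b, P) ∈ brs → beval b = some true → VTrans P α P' →
      VTrans (.cas brs) α P'
  | parL {P : Proc} {α : Act} {P' : Proc} (Q : Proc) :
      VTrans P α P' → (∀ b ∈ bnA α, b ∉ pchans Q) →
      VTrans (.par P Q) α (.par P' Q)
  | parR (P : Proc) {Q : Proc} {α : Act} {Q' : Proc} :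
      VTrans Q α Q' → (∀ b ∈ bnA α, b ∉ pchans P) →
      VTrans (.par P Q) α (.par P Q')
  | comL {P Q : Proc} {c : ℕ} {bs : List ℕ} {v : ℕ} {P' Q' : Proc} :
      VTrans P (.outA c bs (.val v)) P' → VTrans Q (.inA c v) Q' →
      (∀ b ∈ bs, b ∉ pchans Q) →
      VTrans (.par P Q) .tau (resMany bs (.par P' Q'))
  | comR {P Q : Proc} {c : ℕ} {bs : List ℕ} {v : ℕ} {P' Q' : Proc} :
      VTrans P (.inA c v) P' → VTrans Q (.outA c bs (.val v)) Q' →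
      (∀ b ∈ bs, b ∉ pchans P) →
      VTrans (.par P Q) .tau (resMany bs (.par P' Q'))
  | scope {P : Proc} {α : Act} {P' : Proc} {b : ℕ} :
      VTrans P α P' → b ∉ actNames α →
      VTrans (.res b P) α (.res b P')
  | opn {P : Proc} {c : ℕ} {bs : List ℕ} {N : Expr} {P' : Proc} {b : ℕ} :
      VTrans P (.outA c bs N) P' → b ≠ c → b ∉ bs → Sum.inl b ∈ esupp N →
      VTrans (.res b P) (.outA c (b :: bs) N) P'
  | rep {P : Proc} {α : Act} {P' : Proc} :
      VTrans (.par P (.bang P)) α P' → VTrans (.bang P) α P'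

/-- no VPCCS process has a bound-output transition: every
output transition has an empty list of opened names. -/
theorem stmt18 (P : Proc) (c : ℕ) (bs : List ℕ) (N : Expr) (P' : Proc)
    (h : VTrans P (.outA c bs N) P') : bs = [] := by
  have key : ∀ (e : Expr) (b : ℕ), Sum.inl b ∉ esupp e := by
    intro e
    induction e with
    | val v => intro b; simp [esupp]
    | evar x => intro b; simp [esupp]
    | plus a b iha ihb =>
        intro n
        simp only [esupp, Set.mem_union]
        rintro (h | h)
        · exact iha n h
        · exact ihb n h
  suffices H : ∀ {P α P'}, VTrans P α P' → ∀ c bs N, α = .outA c bs N → bs = [] by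
    exact H h c bs N rfl
  intro P α P' ht
  induction ht with
  | out c e P => intro c' bs' N' heq; cases heq; rfl
  | inp c x P v => intro c' bs' N' heq; cases heq
  | cas _ _ _ ih => exact ih
  | parL Q _ _ ih => exact ih
  | parR P _ _ ih => exact ih
  | comL _ _ _ ih1 ih2 => intro c' bs' N' heq; cases heq
  | comR _ _ _ ih1 ih2 => intro c' bs' N' heq; cases heq
  | scope _ _ ih => exact ih
  | opn _ hne hnb hmem ih =>
      intro c' bs' N' heq
      cases heq
      exact absurd hmem (key _ _)
  | rep _ ih => exact ih
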